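/- Let m > 0, ω ∈ ℝ, and for i = 0, 1, 2 let aᵢ = 2πi/3, and qᵢ(t) = (r cos(ωt + aᵢ), r sin(ωt + aᵢ), y, z) with r > 0. Then the total angular momentum component c_{wx}(t) = Σᵢ m (wᵢ ẋᵢ - ẇᵢ xᵢ) equals 3 m r² ω for all t, and the component c_{wy}(t) = Σᵢ m (wᵢ ẏᵢ - ẇᵢ yᵢ) equals 0 for all t. -/

import Mathlib

/-!
Each body moves uniformly on a circle of radius `r` in the `wx`-plane, so it contributes `r²ω`
to `c_wx`. Its `y`-coordinate is constant, so its contribution to `c_wy` is `m r ω y sin (ωt + aᵢ)`,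
and these cancel because the phases `aᵢ` are equally spaced around the circle.
-/

open Real Finset

theorem sum_sin_add_two_pi_mul_div_eq_zero {n : ℕ} (hn : 1 < n) (θ : ℝ) :
    ∑ k ∈ range n, sin (θ + 2 * π * k / n) = 0 := by
  -- the sines are the imaginary parts of `exp (iθ)` times the `n`-th roots of unity
  have hζ := Complex.isPrimitiveRoot_exp n (by omega)
  have hexp : ∀ k : ℕ, Complex.exp (↑(θ + 2 * π * k / n) * Complex.I)
      = Complex.exp (θ * Complex.I) * Complex.exp (2 * π * Complex.I / n) ^ k := by
    intro k
    rw [← Complex.exp_nat_mul, ← Complex.exp_add]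
    push_cast
    ring_nf
  calc ∑ k ∈ range n, sin (θ + 2 * π * k / n)
      = (∑ k ∈ range n, Complex.exp (↑(θ + 2 * π * k / n) * Complex.I)).im := by
        simp only [Complex.im_sum, Complex.exp_ofReal_mul_I_im]
    _ = 0 := by
        simp only [hexp, ← mul_sum, hζ.geom_sum_eq_zero hn, mul_zero, Complex.zero_im]

theorem hasDerivAt_const_mul_cos_mul_add (r ω a t : ℝ) :
    HasDerivAt (fun s => r * cos (ω * s + a)) (-(r * ω * sin (ω * t + a))) t := by
  have := (((hasDerivAt_id t).const_mul ω).add_const a).cos.const_mul r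
  simpa [mul_comm, mul_left_comm, mul_assoc] using this

theorem hasDerivAt_const_mul_sin_mul_add (r ω a t : ℝ) :
    HasDerivAt (fun s => r * sin (ω * s + a)) (r * ω * cos (ω * t + a)) t := by
  have := (((hasDerivAt_id t).const_mul ω).add_const a).sin.const_mul r
  simpa [mul_comm, mul_left_comm, mul_assoc] using this

theorem stmt_10_general (m ω r y : ℝ)
    (a : Fin 3 → ℝ) (ha : ∀ i : Fin 3, a i = 2 * π * (i : ℕ) / 3)
    (W X Y : Fin 3 → ℝ → ℝ)
    (hW : ∀ i t, W i t = r * Real.cos (ω * t + a i))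
    (hX : ∀ i t, X i t = r * Real.sin (ω * t + a i))
    (hY : ∀ i t, Y i t = y) :
    ∀ t : ℝ,
      (∑ i : Fin 3, m * (W i t * deriv (X i) t - deriv (W i) t * X i t))
        = 3 * m * r ^ 2 * ω ∧
      (∑ i : Fin 3, m * (W i t * deriv (Y i) t - deriv (W i) t * Y i t)) = 0 := by
  intro t
  have hW' i : deriv (W i) t = -(r * ω * sin (ω * t + a i)) := by
    rw [show W i = _ from funext (hW i), (hasDerivAt_const_mul_cos_mul_add ..).deriv]
  have hX' i : deriv (X i) t = r * ω * cos (ω * t + a i) := by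
    rw [show X i = _ from funext (hX i), (hasDerivAt_const_mul_sin_mul_add ..).deriv]
  have hY' i : deriv (Y i) t = 0 := by
    rw [show Y i = _ from funext (hY i), deriv_const]
  have hsin : ∑ i : Fin 3, sin (ω * t + a i) = 0 := by
    simpa only [ha, Nat.cast_ofNat] using
      (Fin.sum_univ_eq_sum_range (fun k : ℕ => sin (ω * t + 2 * π * k / 3)) 3).trans
        (sum_sin_add_two_pi_mul_div_eq_zero (by norm_num) (ω * t))
  constructor
  · calc ∑ i : Fin 3, m * (W i t * deriv (X i) t - deriv (W i) t * X i t)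
        = ∑ i : Fin 3, m * r ^ 2 * ω * (sin (ω * t + a i) ^ 2 + cos (ω * t + a i) ^ 2) := by
          refine sum_congr rfl fun i _ => ?_
          rw [hW, hX, hW', hX']
          ring
      _ = 3 * m * r ^ 2 * ω := by
          simp only [sin_sq_add_cos_sq, mul_one, sum_const, card_univ, Fintype.card_fin,
            nsmul_eq_mul]
          ring
  · calc ∑ i : Fin 3, m * (W i t * deriv (Y i) t - deriv (W i) t * Y i t)
        = m * r * ω * y * ∑ i : Fin 3, sin (ω * t + a i) := by
          rw [mul_sum]
          refine sum_congr rfl fun i _ => ?_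
          rw [hY, hW', hY']
          ring
      _ = 0 := by rw [hsin, mul_zero]

theorem stmt_10 (m ω r y z : ℝ) (hm : 0 < m) (hr : 0 < r)
    (a : Fin 3 → ℝ) (ha : ∀ i : Fin 3, a i = 2 * π * (i : ℕ) / 3)
    (W X Y Z : Fin 3 → ℝ → ℝ)
    (hW : ∀ i t, W i t = r * Real.cos (ω * t + a i))
    (hX : ∀ i t, X i t = r * Real.sin (ω * t + a i))
    (hY : ∀ i t, Y i t = y) (hZ : ∀ i t, Z i t = z) :
    ∀ t : ℝ,
      (∑ i : Fin 3, m * (W i t * deriv (X i) t - deriv (W i) t * X i t))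
        = 3 * m * r ^ 2 * ω ∧
      (∑ i : Fin 3, m * (W i t * deriv (Y i) t - deriv (W i) t * Y i t)) = 0 :=
  stmt_10_general m ω r y a ha W X Y hW hX hY
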